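/- Let X ∈ C²(𝕊¹; ℝ²) with |X|_* = inf_{s≠s'} |X(s)-X(s')|/|s-s'| > 0. Define A_i(s,s') = (Xᵢ(s) - Xᵢ(s'))/|X(s) - X(s')|. Then there is an absolute constant C such that |∂ₛ A_i(s,s')| ≤ C ‖X‖_{C²} / |X|_* for all s ≠ s'. -/

import Mathlib

/-!
Write `Δ = X s - X s'`, `v = X'(s)` and `δ = s - s'`. The derivative at `s` of
`t ↦ ⟪w, X t - X s'⟫ / ‖X t - X s'‖` is `(⟪w, v⟫ ‖Δ‖² - ⟪w, Δ⟫ ⟪Δ, v⟫) / ‖Δ‖³`, whose numerator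
vanishes when `v` is parallel to `Δ`. So `δ` times the numerator only sees the Taylor remainder
`Δ - δ v = O(‖X‖_{C²} δ²)`, which gives `‖Δ‖ |∂ₛA| ≤ 2 ‖X‖_{C²} |δ|`. The chord-arc bound
`‖Δ‖ ≥ |X|_* |δ|`, applied with the lift of `s'` nearest to `s`, then gives
`|∂ₛA| ≤ 2 ‖X‖_{C²} / |X|_*`.
-/

open Real

noncomputable section

abbrev E2 := EuclideanSpace ℝ (Fin 2)

/-- The chord-arc constant `|X|_*`. -/
noncomputable def starNorm (X : ℝ → E2) : ℝ :=
  sInf {r : ℝ | ∃ s s' : ℝ, ((s : AddCircle (2 * π)) ≠ (s' : AddCircle (2 * π))) ∧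
    r = ‖X s - X s'‖ / dist (s : AddCircle (2 * π)) (s' : AddCircle (2 * π))}

/-- The `C²` norm `‖X‖_{C²} = sup_s (|X| + |∂ₛX| + |∂ₛ²X|)`. -/
noncomputable def C2norm (X : ℝ → E2) : ℝ :=
  ⨆ s : ℝ, (‖X s‖ + ‖deriv X s‖ + ‖iteratedDeriv 2 X s‖)

open scoped RealInnerProductSpace

section NormedSpace

variable {E : Type*} [NormedAddCommGroup E] [NormedSpace ℝ E]

theorem Function.Periodic.deriv {f : ℝ → E} {c : ℝ} (hf : Function.Periodic f c) :
    Function.Periodic (deriv f) c :=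
  fun x => by rw [← deriv_comp_add_const, hf.funext]

theorem norm_deriv_sub_deriv_le {f : ℝ → E} (hf : ContDiff ℝ 2 f) {M : ℝ}
    (hM : ∀ t, ‖iteratedDeriv 2 f t‖ ≤ M) (a b : ℝ) :
    ‖deriv f b - deriv f a‖ ≤ M * |b - a| := by
  have hdf : Differentiable ℝ (deriv f) := by
    have := hf.differentiable_iteratedDeriv 1 (by norm_num)
    simpa [iteratedDeriv_one] using this
  have hdd : ∀ t, ‖deriv (deriv f) t‖ ≤ M := fun t => by
    simpa [iteratedDeriv_succ, iteratedDeriv_one] using hM t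
  simpa [Real.norm_eq_abs] using
    convex_univ.norm_image_sub_le_of_norm_deriv_le (fun t _ => hdf t) (fun t _ => hdd t)
      (Set.mem_univ a) (Set.mem_univ b)

theorem norm_sub_sub_smul_deriv_le {f : ℝ → E} (hf : ContDiff ℝ 2 f) {M : ℝ}
    (hM : ∀ t, ‖iteratedDeriv 2 f t‖ ≤ M) (a b : ℝ) :
    ‖f b - f a - (b - a) • deriv f a‖ ≤ M * (b - a) ^ 2 := by
  have hg : ∀ t, HasDerivAt (fun u : ℝ => f u - u • deriv f a) (deriv f t - deriv f a) t :=
    fun t => ((hf.differentiable two_ne_zero t).hasDerivAt).sub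
      (by simpa using (hasDerivAt_id t).smul_const (deriv f a))
  have hM0 : 0 ≤ M := (norm_nonneg _).trans (hM a)
  have hbound : ∀ t ∈ Set.uIcc a b, ‖deriv f t - deriv f a‖ ≤ M * |b - a| := fun t ht =>
    (norm_deriv_sub_deriv_le hf hM a t).trans
      (mul_le_mul_of_nonneg_left (Set.abs_sub_left_of_mem_uIcc ht) hM0)
  have := (convex_uIcc a b).norm_image_sub_le_of_norm_hasDerivWithin_le
    (fun t _ => (hg t).hasDerivWithinAt) hbound Set.left_mem_uIcc Set.right_mem_uIcc
  calc ‖f b - f a - (b - a) • deriv f a‖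
      = ‖(f b - b • deriv f a) - (f a - a • deriv f a)‖ := by rw [sub_smul]; abel_nf
    _ ≤ M * |b - a| * ‖b - a‖ := this
    _ = M * (b - a) ^ 2 := by rw [Real.norm_eq_abs, mul_assoc, abs_mul_abs_self, sq]

end NormedSpace

section InnerProductSpace

variable {E : Type*} [NormedAddCommGroup E] [InnerProductSpace ℝ E]

theorem HasDerivAt.inner_div_norm {f : ℝ → E} {v : E} {s : ℝ} (hf : HasDerivAt f v s)
    (h0 : f s ≠ 0) (w : E) :
    HasDerivAt (fun t => ⟪w, f t⟫ / ‖f t‖)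
      ((⟪w, v⟫ * ‖f s‖ ^ 2 - ⟪w, f s⟫ * ⟪f s, v⟫) / ‖f s‖ ^ 3) s := by
  have hr : 0 < ‖f s‖ := norm_pos_iff.2 h0
  have hnorm : HasDerivAt (fun t => ‖f t‖) (⟪f s, v⟫ / ‖f s‖) s := by
    have := hf.norm_sq.sqrt (by positivity)
    simp only [sqrt_sq (norm_nonneg _)] at this
    convert this using 1
    field_simp
  have hinner : HasDerivAt (fun t => ⟪w, f t⟫) ⟪w, v⟫ s := by
    simpa using (hasDerivAt_const s w).inner ℝ hf
  refine (hinner.div hnorm hr.ne').congr_deriv ?_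
  field_simp

theorem abs_inner_mul_norm_sq_sub_le (w Δ v : E) (δ : ℝ) :
    |δ| * |⟪w, v⟫ * ‖Δ‖ ^ 2 - ⟪w, Δ⟫ * ⟪Δ, v⟫| ≤ 2 * ‖w‖ * ‖Δ‖ ^ 2 * ‖Δ - δ • v‖ := by
  set R := Δ - δ • v
  have hv : δ • v = Δ - R := by simp [R]
  have key :
      δ * (⟪w, v⟫ * ‖Δ‖ ^ 2 - ⟪w, Δ⟫ * ⟪Δ, v⟫) = ⟪w, Δ⟫ * ⟪Δ, R⟫ - ⟪w, R⟫ * ‖Δ‖ ^ 2 := by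
    have h1 : δ * ⟪w, v⟫ = ⟪w, Δ⟫ - ⟪w, R⟫ := by
      rw [← real_inner_smul_right, hv, inner_sub_right]
    have h2 : δ * ⟪Δ, v⟫ = ‖Δ‖ ^ 2 - ⟪Δ, R⟫ := by
      rw [← real_inner_smul_right, hv, inner_sub_right, real_inner_self_eq_norm_sq]
    linear_combination ‖Δ‖ ^ 2 * h1 - ⟪w, Δ⟫ * h2
  rw [← abs_mul, key]
  calc |⟪w, Δ⟫ * ⟪Δ, R⟫ - ⟪w, R⟫ * ‖Δ‖ ^ 2|
      ≤ |⟪w, Δ⟫| * |⟪Δ, R⟫| + |⟪w, R⟫| * ‖Δ‖ ^ 2 := by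
        rw [← abs_mul, ← abs_of_nonneg (sq_nonneg ‖Δ‖), ← abs_mul, abs_of_nonneg (sq_nonneg ‖Δ‖)]
        exact abs_sub _ _
    _ ≤ (‖w‖ * ‖Δ‖) * (‖Δ‖ * ‖R‖) + (‖w‖ * ‖R‖) * ‖Δ‖ ^ 2 := by
        gcongr
        · exact abs_real_inner_le_norm w Δ
        · exact abs_real_inner_le_norm Δ R
        · exact abs_real_inner_le_norm w R
    _ = 2 * ‖w‖ * ‖Δ‖ ^ 2 * ‖R‖ := by ring

theorem norm_sub_mul_abs_deriv_inner_div_norm_le {f : ℝ → E} (hf : ContDiff ℝ 2 f) {M : ℝ}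
    (hM : ∀ t, ‖iteratedDeriv 2 f t‖ ≤ M) (w : E) {a b : ℝ} (hab : f a ≠ f b) :
    ‖f a - f b‖ * |deriv (fun t => ⟪w, f t - f b⟫ / ‖f t - f b‖) a| ≤ 2 * M * ‖w‖ * |a - b| := by
  set Δ := f a - f b
  set v := deriv f a
  have hr : 0 < ‖Δ‖ := norm_pos_iff.2 (sub_ne_zero.2 hab)
  have hδ : 0 < |a - b| := abs_pos.2 (sub_ne_zero.2 fun h => hab (h ▸ rfl))
  have hderiv := (((hf.differentiable two_ne_zero a).hasDerivAt.sub_const (f b)).inner_div_norm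
    (sub_ne_zero.2 hab) w).deriv
  have htaylor : ‖Δ - (a - b) • v‖ ≤ M * |a - b| ^ 2 := by
    calc ‖Δ - (a - b) • v‖ = ‖f b - f a - (b - a) • v‖ := by
          rw [← norm_neg]; congr 1; module
      _ ≤ M * (b - a) ^ 2 := norm_sub_sub_smul_deriv_le hf hM a b
      _ = M * |a - b| ^ 2 := by rw [sq_abs, ← neg_sub a b, neg_sq]
  have hnum : |⟪w, v⟫ * ‖Δ‖ ^ 2 - ⟪w, Δ⟫ * ⟪Δ, v⟫| ≤ 2 * M * ‖w‖ * |a - b| * ‖Δ‖ ^ 2 := by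
    refine le_of_mul_le_mul_left ?_ hδ
    calc |a - b| * |⟪w, v⟫ * ‖Δ‖ ^ 2 - ⟪w, Δ⟫ * ⟪Δ, v⟫|
        ≤ 2 * ‖w‖ * ‖Δ‖ ^ 2 * ‖Δ - (a - b) • v‖ := abs_inner_mul_norm_sq_sub_le w Δ v (a - b)
      _ ≤ 2 * ‖w‖ * ‖Δ‖ ^ 2 * (M * |a - b| ^ 2) := by gcongr
      _ = |a - b| * (2 * M * ‖w‖ * |a - b| * ‖Δ‖ ^ 2) := by ring
  rw [hderiv, abs_div, abs_of_pos (by positivity : (0 : ℝ) < ‖Δ‖ ^ 3), mul_div_assoc',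
    div_le_iff₀ (by positivity)]
  calc ‖Δ‖ * |⟪w, v⟫ * ‖Δ‖ ^ 2 - ⟪w, Δ⟫ * ⟪Δ, v⟫|
      ≤ ‖Δ‖ * (2 * M * ‖w‖ * |a - b| * ‖Δ‖ ^ 2) := by gcongr
    _ = 2 * M * ‖w‖ * |a - b| * ‖Δ‖ ^ 3 := by ring

end InnerProductSpace

theorem AddCircle.exists_dist_eq_abs_sub (p s s' : ℝ) :
    ∃ k : ℤ, dist (s : AddCircle p) (s' : AddCircle p) = |s - (s' + k * p)| := by
  rw [dist_eq_norm, ← QuotientAddGroup.mk_sub, AddCircle.norm_eq]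
  exact ⟨round (p⁻¹ * (s - s')), by ring_nf⟩

theorem le_C2norm {X : ℝ → E2} (hper : Function.Periodic X (2 * π)) (hX : ContDiff ℝ 2 X)
    (t : ℝ) :
    ‖X t‖ + ‖deriv X t‖ + ‖iteratedDeriv 2 X t‖ ≤ C2norm X := by
  rw [C2norm, iteratedDeriv_succ, iteratedDeriv_one]
  have hcont : Continuous fun t => ‖X t‖ + ‖deriv X t‖ + ‖deriv (deriv X) t‖ := by
    have h2 := hX.continuous_iteratedDeriv 2 le_rfl
    rw [iteratedDeriv_succ, iteratedDeriv_one] at h2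
    exact (hX.continuous.norm.add (hX.continuous_deriv one_le_two).norm).add h2.norm
  have hperiodic :
      Function.Periodic (fun t => ‖X t‖ + ‖deriv X t‖ + ‖deriv (deriv X) t‖) (2 * π) :=
    fun t => by simp only [hper t, hper.deriv t, hper.deriv.deriv t]
  exact le_ciSup (hperiodic.compact_of_continuous two_pi_pos.ne' hcont).bddAbove t

theorem starNorm_mul_dist_le (X : ℝ → E2) {s s' : ℝ}
    (hne : (s : AddCircle (2 * π)) ≠ (s' : AddCircle (2 * π))) :
    starNorm X * dist (s : AddCircle (2 * π)) (s' : AddCircle (2 * π)) ≤ ‖X s - X s'‖ := by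
  have hd : 0 < dist (s : AddCircle (2 * π)) (s' : AddCircle (2 * π)) := dist_pos.2 hne
  rw [← le_div_iff₀ hd]
  refine csInf_le ⟨0, ?_⟩ ⟨s, s', hne, rfl⟩
  rintro r ⟨u, u', -, rfl⟩
  positivity

/-- uniform bound `|∂ₛ A_i(s,s')| ≤ C ‖X‖_{C²} / |X|_*` for the normalized
chord direction `A_i(s,s') = (Xᵢ(s) - Xᵢ(s'))/|X(s) - X(s')|`, with `C` an absolute constant. -/
theorem stmt2 : ∃ C : ℝ, 0 < C ∧
    ∀ X : ℝ → E2, Function.Periodic X (2 * π) → ContDiff ℝ 2 X → 0 < starNorm X →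
      ∀ s s' : ℝ, (s : AddCircle (2 * π)) ≠ (s' : AddCircle (2 * π)) → ∀ i : Fin 2,
        |deriv (fun t : ℝ => (X t i - X s' i) / ‖X t - X s'‖) s|
          ≤ C * C2norm X / starNorm X := by
  refine ⟨2, two_pos, fun X hper hX hstar s s' hne i => ?_⟩
  have hM : ∀ t, ‖iteratedDeriv 2 X t‖ ≤ C2norm X := fun t => by
    linarith [le_C2norm hper hX t, norm_nonneg (X t), norm_nonneg (deriv X t)]
  obtain ⟨k, hk⟩ := AddCircle.exists_dist_eq_abs_sub (2 * π) s s'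
  set s'' := s' + k * (2 * π)
  have hXs'' : X s'' = X s' := hper.int_mul k s'
  have hchord : starNorm X * |s - s''| ≤ ‖X s - X s''‖ := by
    rw [← hk, hXs'']; exact starNorm_mul_dist_le X hne
  have hδ : 0 < |s - s''| := hk ▸ dist_pos.2 hne
  have hXne : X s ≠ X s'' := fun h => by
    rw [h, sub_self, norm_zero] at hchord
    exact (mul_pos hstar hδ).not_ge hchord
  have hbound := norm_sub_mul_abs_deriv_inner_div_norm_le hX hM
    (EuclideanSpace.single i (1 : ℝ)) hXne
  simp only [EuclideanSpace.inner_single_left, PiLp.norm_single, PiLp.sub_apply,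
    hXs'', map_one, one_mul, norm_one, mul_one] at hbound
  set D := |deriv (fun t : ℝ => (X t i - X s' i) / ‖X t - X s'‖) s|
  rw [le_div_iff₀ hstar]
  refine le_of_mul_le_mul_right ?_ hδ
  calc D * starNorm X * |s - s''| = D * (starNorm X * |s - s''|) := by ring
    _ ≤ D * ‖X s - X s'‖ := by rw [← hXs'']; gcongr
    _ ≤ 2 * C2norm X * |s - s''| := by linarith

end
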